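/- arXiv:2401.04401 — 2 statements merged into one kernel-verified Lean document; each statement's English description precedes it below -/
import Mathlib

section
/- With Ω₁ real-path-connected, Ω₂ Ω₁-stem-preserving, and f : Ω₂ → ℍ path-slice: if F is any path-slice stem function of f, then F_{Ω₁}^f coincides with the restriction of F to 𝒫(ℂⁿ, Ω₁). -/
noncomputable section
open Quaternion Matrix

abbrev Hq := Quaternion ℝ

/-- The set of quaternionic imaginary units. -/
def Sph : Set Hq := {I | I ^ 2 = -1}

/-- `Ψ_i^I` applied to a single complex number: `x + y i ↦ x + y I`. -/
def psi (I : Hq) (z : ℂ) : Hq := (z.re : Hq) + z.im • I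

/-- `Ψ_i^I : ℂⁿ → ℂ_Iⁿ`, componentwise. -/
def liftMap {n : ℕ} (I : Hq) (z : Fin n → ℂ) : Fin n → Hq := fun k => psi I (z k)

/-- The weakly slice cone `Hqₛⁿ = ⋃_{I∈𝕊} ℂ_Iⁿ`. -/
def HSn (n : ℕ) : Set (Fin n → Hq) := {q | ∃ I ∈ Sph, ∃ z : Fin n → ℂ, q = liftMap I z}

/-- A point of `ℂⁿ` is real. -/
def isRealPt {n : ℕ} (z : Fin n → ℂ) : Prop := ∀ k, (z k).im = 0

/-- A point of `Hqⁿ` is real. -/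
def isRealH {n : ℕ} (q : Fin n → Hq) : Prop := ∀ k, q k = ((q k).re : Hq)

/-- The lifted path `γ^I = Ψ_i^I ∘ γ`. -/
def liftP {n : ℕ} (γ : C(unitInterval, Fin n → ℂ)) (I : Hq) (t : unitInterval) : Fin n → Hq :=
  liftMap I (γ t)

/-- `𝕊(Ω, γ) = {I ∈ 𝕊 : γ^I ⊂ Ω}`. -/
def SUnits {n : ℕ} (Ω : Set (Fin n → Hq)) (γ : C(unitInterval, Fin n → ℂ)) : Set Hq :=
  {I | I ∈ Sph ∧ ∀ t, liftP γ I t ∈ Ω}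

/-- `𝒫(ℂⁿ, Ω)`: continuous paths starting in `ℝⁿ` with some lift inside `Ω`. -/
def PathsTo {n : ℕ} (Ω : Set (Fin n → Hq)) : Set C(unitInterval, Fin n → ℂ) :=
  {γ | isRealPt (γ 0) ∧ ∃ I, I ∈ SUnits Ω γ}

/-- `F` is a path-slice stem function of `f` on `Ω`:
`f(γ^I(1)) = (1, I)·F(γ)`. -/
def IsStem {n : ℕ} (Ω : Set (Fin n → Hq)) (f : (Fin n → Hq) → Hq)
    (F : C(unitInterval, Fin n → ℂ) → Fin 2 → Hq) : Prop :=
  ∀ γ ∈ PathsTo Ω, ∀ I ∈ SUnits Ω γ, f (liftP γ I 1) = F γ 0 + I * F γ 1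

/-- `f` is path-slice on `Ω`. -/
def IsPathSlice {n : ℕ} (Ω : Set (Fin n → Hq)) (f : (Fin n → Hq) → Hq) : Prop :=
  ∃ F, IsStem Ω f F

/-- `Ω` is real-path-connected. -/
def RealPathConnected {n : ℕ} (Ω : Set (Fin n → Hq)) : Prop :=
  ∀ q ∈ Ω, ∃ γ ∈ PathsTo Ω, ∃ I ∈ SUnits Ω γ, liftP γ I 1 = q

/-- `Ω₂` is `Ω₁`-stem-preserving: (i) every path of `𝒫(ℂⁿ,Ω₁)` has at least two
units in `𝕊(Ω₂,γ)`; (ii) two paths with the same endpoint share `≠ 1` units. -/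
def StemPreserving {n : ℕ} (Ω₁ Ω₂ : Set (Fin n → Hq)) : Prop :=
  (∀ γ ∈ PathsTo Ω₁, ∃ I ∈ SUnits Ω₂ γ, ∃ J ∈ SUnits Ω₂ γ, I ≠ J) ∧
  (∀ α ∈ PathsTo Ω₁, ∀ β ∈ PathsTo Ω₁, α 1 = β 1 →
    ∀ I ∈ SUnits Ω₂ α ∩ SUnits Ω₂ β, ∃ J ∈ SUnits Ω₂ α ∩ SUnits Ω₂ β, J ≠ I)

/-- The formula `((1,I),(1,J))⁻¹ (f(γ^I(1)), f(γ^J(1)))ᵀ`. -/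
def stemFormula {n : ℕ} (f : (Fin n → Hq) → Hq) (γ : C(unitInterval, Fin n → ℂ)) (I J : Hq) :
    Fin 2 → Hq :=
  ((I - J)⁻¹ • !![I, -J; (1 : Hq), -1]).mulVec ![f (liftP γ I 1), f (liftP γ J 1)]

/-- The sub-stem function `F_{Ω₁}^f` (depends only on `Ω₂` and `f`). -/
noncomputable def subStem {n : ℕ} (Ω₂ : Set (Fin n → Hq)) (f : (Fin n → Hq) → Hq)
    (γ : C(unitInterval, Fin n → ℂ)) : Fin 2 → Hq := by
  classical
  exact if h : ∃ p : Hq × Hq, p.1 ∈ SUnits Ω₂ γ ∧ p.2 ∈ SUnits Ω₂ γ ∧ p.1 ≠ p.2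
    then stemFormula f γ h.choose.1 h.choose.2
    else 0

/-- Normalized imaginary part of a quaternion. -/
def imUnit (a : Hq) : Hq := (‖a - (a.re : Hq)‖)⁻¹ • (a - (a.re : Hq))

/-- The map `𝔍 : Hqₛⁿ → 𝕊 ∪ {0}`. -/
noncomputable def Jmap {n : ℕ} (q : Fin n → Hq) : Hq := by
  classical
  exact if h : ∃ k : Fin n, q k ≠ ((q k).re : Hq) then
    imUnit (q ((Finset.univ.filter fun k => q k ≠ ((q k).re : Hq)).min'
      ⟨h.choose, Finset.mem_filter.2 ⟨Finset.mem_univ _, h.choose_spec⟩⟩))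
  else 0

/-- Componentwise complex conjugate of a path. -/
def conjPath {n : ℕ} (γ : C(unitInterval, Fin n → ℂ)) : C(unitInterval, Fin n → ℂ) :=
  ⟨fun t k => star (γ t k),
    continuous_pi fun k => continuous_star.comp ((continuous_apply k).comp γ.continuous)⟩

/-- The point-form sub-stem function `ℱ_{Ω₁}^f : Ω₁ → Hq^{2×1}`. -/
noncomputable def pointStem {n : ℕ} (Ω₁ Ω₂ : Set (Fin n → Hq)) (f : (Fin n → Hq) → Hq)
    (q : Fin n → Hq) : Fin 2 → Hq := by
  classical
  exact if isRealH q then ![f q, 0]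
    else if h : ∃ γ, γ ∈ PathsTo Ω₁ ∧ (∀ t, liftP γ (Jmap q) t ∈ Ω₁) ∧ liftP γ (Jmap q) 1 = q
    then subStem Ω₂ f h.choose
    else 0

/-- The `*`-product of functions: `(f*g)(q) = (f(q), 𝔍(q)f(q)) · ℱ_{Ω₁}^g(q)`. -/
noncomputable def starProd {n : ℕ} (Ω₁ Ω₂ : Set (Fin n → Hq)) (f g : (Fin n → Hq) → Hq)
    (q : Fin n → Hq) : Hq :=
  f q * pointStem Ω₁ Ω₂ g q 0 + (Jmap q * f q) * pointStem Ω₁ Ω₂ g q 1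

/-- The `*`-product on `Hq^{2×1}` coming from `Hq ⊗_ℝ ℂ`. -/
def vstar (p q : Fin 2 → Hq) : Fin 2 → Hq :=
  ![p 0 * q 0 - p 1 * q 1, p 1 * q 0 + p 0 * q 1]

/-- `Ω` is slice-open: a subset of `Hqₛⁿ` all of whose slices are open. -/
def SliceOpen {n : ℕ} (Ω : Set (Fin n → Hq)) : Prop :=
  Ω ⊆ HSn n ∧ ∀ I ∈ Sph, IsOpen {z : Fin n → ℂ | liftMap I z ∈ Ω}

/-- `Ω` is slice-connected. -/
def SliceConnected {n : ℕ} (Ω : Set (Fin n → Hq)) : Prop :=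
  ∀ U V : Set (Fin n → Hq), SliceOpen U → SliceOpen V → Ω ⊆ U ∪ V →
    (Ω ∩ U).Nonempty → (Ω ∩ V).Nonempty → (Ω ∩ U ∩ V).Nonempty

/-- `Ω` is a slice-domain. -/
def SliceDomain {n : ℕ} (Ω : Set (Fin n → Hq)) : Prop :=
  SliceOpen Ω ∧ SliceConnected Ω

/-- `Ω` is self-stem-preserving. -/
def SelfStemPreserving {n : ℕ} (Ω : Set (Fin n → Hq)) : Prop :=
  RealPathConnected Ω ∧ StemPreserving Ω Ω

/-- `Ω` is open in the Euclidean subspace topology of `Hqₛⁿ`. -/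
def EuclideanOpenIn {n : ℕ} (Ω : Set (Fin n → Hq)) : Prop :=
  ∃ U : Set (Fin n → Hq), IsOpen U ∧ Ω = U ∩ HSn n

/-- `Ω` is weakly axially symmetric. -/
def WeaklyAxiallySymmetric {n : ℕ} (Ω : Set (Fin n → Hq)) : Prop :=
  ∀ (x y : Fin n → ℝ) (I : Hq), I ∈ Sph →
    (fun k => (x k : Hq) + y k • I) ∈ Ω → (fun k => (x k : Hq) - y k • I) ∈ Ω

/- Since `(1, I)·(a, b) = a + I b`, the values at two units `I ≠ J` with `I² = J²` determine
`(a, b)`: subtracting them gives `(I - J) b`, and `I·(a + I b) - J·(a + J b) = (I - J) a`. -/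
theorem inv_sub_smul_mulVec_add_mul {D : Type*} [DivisionRing D] {I J : D} (hIJ : I ≠ J)
    (hsq : I * I = J * J) (a b : D) :
    ((I - J)⁻¹ • !![I, -J; 1, -1]) *ᵥ ![a + I * b, a + J * b] = ![a, b] := by
  have hcancel := inv_mul_cancel_left₀ (sub_ne_zero.2 hIJ)
  ext k
  fin_cases k <;>
    simp only [mulVec, dotProduct, Fin.sum_univ_two, Matrix.smul_apply, of_apply, cons_val',
      cons_val_zero, cons_val_one, empty_val', cons_val_fin_one, smul_eq_mul, Fin.zero_eta,
      Fin.mk_one]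
  · calc (I - J)⁻¹ * I * (a + I * b) + (I - J)⁻¹ * -J * (a + J * b)
        = (I - J)⁻¹ * ((I - J) * a + (I * I - J * J) * b) := by noncomm_ring
      _ = a := by rw [hsq, sub_self, zero_mul, add_zero, hcancel]
  · calc (I - J)⁻¹ * 1 * (a + I * b) + (I - J)⁻¹ * -1 * (a + J * b)
        = (I - J)⁻¹ * ((I - J) * b) := by noncomm_ring
      _ = b := hcancel b

theorem mul_self_eq_neg_one_of_mem_Sph {I : Hq} (hI : I ∈ Sph) : I * I = -1 :=
  (sq I).symm.trans hI

theorem stemFormula_eq_of_isStem {n : ℕ} {Ω : Set (Fin n → Hq)} {f : (Fin n → Hq) → Hq}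
    {F : C(unitInterval, Fin n → ℂ) → Fin 2 → Hq} (hF : IsStem Ω f F)
    {γ : C(unitInterval, Fin n → ℂ)} (hγ : γ ∈ PathsTo Ω) {I J : Hq} (hI : I ∈ SUnits Ω γ)
    (hJ : J ∈ SUnits Ω γ) (hIJ : I ≠ J) : stemFormula f γ I J = F γ := by
  have hsq : I * I = J * J := by
    rw [mul_self_eq_neg_one_of_mem_Sph hI.1, mul_self_eq_neg_one_of_mem_Sph hJ.1]
  rw [stemFormula, hF γ hγ I hI, hF γ hγ J hJ, inv_sub_smul_mulVec_add_mul hIJ hsq]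
  funext k
  fin_cases k <;> rfl

theorem subStem_eq_of_isStem {n : ℕ} {Ω : Set (Fin n → Hq)} {f : (Fin n → Hq) → Hq}
    {F : C(unitInterval, Fin n → ℂ) → Fin 2 → Hq} (hF : IsStem Ω f F)
    {γ : C(unitInterval, Fin n → ℂ)} (hγ : γ ∈ PathsTo Ω)
    (hunits : ∃ I ∈ SUnits Ω γ, ∃ J ∈ SUnits Ω γ, I ≠ J) : subStem Ω f γ = F γ := by
  obtain ⟨I, hI, J, hJ, hIJ⟩ := hunits
  have hpair : ∃ p : Hq × Hq, p.1 ∈ SUnits Ω γ ∧ p.2 ∈ SUnits Ω γ ∧ p.1 ≠ p.2 :=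
    ⟨(I, J), hI, hJ, hIJ⟩
  rw [subStem, dif_pos hpair]
  exact stemFormula_eq_of_isStem hF hγ hpair.choose_spec.1 hpair.choose_spec.2.1
    hpair.choose_spec.2.2

theorem subStem_eq_stem_restriction_general {n : ℕ} (Ω₁ Ω₂ : Set (Fin n → Hq))
    (h₂ : StemPreserving Ω₁ Ω₂)
    (f : (Fin n → Hq) → Hq) (F : C(unitInterval, Fin n → ℂ) → Fin 2 → Hq)
    (hF : IsStem Ω₂ f F) :
    ∀ γ ∈ PathsTo Ω₁, subStem Ω₂ f γ = F γ := by
  intro γ hγ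
  obtain ⟨I, hI, J, hJ, hIJ⟩ := h₂.1 γ hγ
  exact subStem_eq_of_isStem hF ⟨hγ.1, I, hI⟩ ⟨I, hI, J, hJ, hIJ⟩

/-- `F_{Ω₁}^f` coincides with the restriction to `𝒫(ℂⁿ,Ω₁)` of any
path-slice stem function `F` of `f`. -/
theorem subStem_eq_stem_restriction {n : ℕ} (Ω₁ Ω₂ : Set (Fin n → Hq))
    (h₁ : RealPathConnected Ω₁) (h₂ : StemPreserving Ω₁ Ω₂)
    (f : (Fin n → Hq) → Hq) (F : C(unitInterval, Fin n → ℂ) → Fin 2 → Hq)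
    (hF : IsStem Ω₂ f F) :
    ∀ γ ∈ PathsTo Ω₁, subStem Ω₂ f γ = F γ :=
  subStem_eq_stem_restriction_general Ω₁ Ω₂ h₂ f F hF
end
end

section
/- Let Ω₁ ⊂ ℍₛⁿ be real-path-connected, Ω₂ ⊂ ℍₛⁿ be Ω₁-stem-preserving, f ∈ 𝒫𝒮(Ω₁) with stem function F, and g ∈ 𝒫𝒮(Ω₂). Then f*g : Ω₁ → ℍ is path-slice, and F * F_{Ω₁}^g is a path-slice stem function of f*g. -/
noncomputable section
open Quaternion Matrix

/-! Stem values are determined by the values on two distinct units, and the stem-preserving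
hypothesis supplies two such units for every path of `𝒫(ℂⁿ, Ω₁)`; for two paths with a common
endpoint it supplies two shared units, found along the first path followed by the reverse of the
second. Hence the stem `G` of `g` agrees with the sub-stem `F_{Ω₁}^g`, `G(γ)` only depends on
`γ(1)`, and `G(γ̄) = (G₀(γ), -G₁(γ))`. At `q = γ^I(1)` the unit `𝔍(q)` is `±I` (or `q` is real),
so the point-form sub-stem of `g` at `q` is `G(γ)`, resp. `G(γ̄)` read along `γ̄^{-I}`, and in both
cases `(f*g)(q) = f(q) G₀(γ) + I f(q) G₁(γ)`. Expanding `f(q) = F₀(γ) + I F₁(γ)` with `I² = -1`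
turns this into `(1, I)·(F * G)(γ)`. -/

section ImaginaryUnits

variable {I : Hq}

lemma mul_self_of_mem_Sph (hI : I ∈ Sph) : I * I = -1 :=
  (sq I).symm.trans hI

lemma neg_mem_Sph_iff : -I ∈ Sph ↔ I ∈ Sph := by
  simp only [Sph, Set.mem_ofPred_eq, neg_sq]

lemma ne_zero_of_mem_Sph (hI : I ∈ Sph) : I ≠ 0 := by
  rintro rfl
  have h : (0 : Hq) ^ 2 = -1 := hI
  norm_num at h

lemma norm_eq_one_of_mem_Sph (hI : I ∈ Sph) : ‖I‖ = 1 := by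
  have : ‖I‖ ^ 2 = 1 := by rw [← norm_pow, hI, norm_neg, norm_one]
  exact (pow_eq_one_iff_of_nonneg (norm_nonneg I) two_ne_zero).1 this

lemma re_eq_zero_of_mem_Sph (hI : I ∈ Sph) : I.re = 0 := by
  refine Quaternion.sq_eq_neg_normSq.1 ?_
  rw [hI, Quaternion.normSq_eq_norm_mul_self, norm_eq_one_of_mem_Sph hI]
  simp

lemma psi_re (hI : I ∈ Sph) (z : ℂ) : (psi I z).re = z.re := by
  simp [psi, re_eq_zero_of_mem_Sph hI]

lemma psi_sub_re (hI : I ∈ Sph) (z : ℂ) : psi I z - ((psi I z).re : Hq) = z.im • I := by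
  rw [psi_re hI, psi, add_sub_cancel_left]

lemma psi_eq_re_iff (hI : I ∈ Sph) (z : ℂ) : psi I z = ((psi I z).re : Hq) ↔ z.im = 0 := by
  rw [← sub_eq_zero, psi_sub_re hI, smul_eq_zero, or_iff_left (ne_zero_of_mem_Sph hI)]

lemma psi_of_im_eq_zero (I : Hq) {z : ℂ} (hz : z.im = 0) : psi I z = (z.re : Hq) := by
  simp [psi, hz]

lemma psi_injective (hI : I ∈ Sph) : Function.Injective (psi I) := by
  intro z w h
  have hre : z.re = w.re := by simpa only [psi_re hI] using congrArg QuaternionAlgebra.re h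
  have him : z.im • I = w.im • I := by rw [← psi_sub_re hI, ← psi_sub_re hI, h]
  exact Complex.ext hre (smul_left_injective ℝ (ne_zero_of_mem_Sph hI) him)

lemma psi_star (I : Hq) (z : ℂ) : psi I (star z) = psi (-I) z := by
  simp [psi]

lemma liftMap_injective {n : ℕ} (hI : I ∈ Sph) : Function.Injective (liftMap (n := n) I) :=
  fun _ _ h => funext fun k => psi_injective hI (congrFun h k)

lemma isRealH_liftMap_iff {n : ℕ} (hI : I ∈ Sph) (z : Fin n → ℂ) :
    isRealH (liftMap I z) ↔ isRealPt z :=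
  forall_congr' fun k => psi_eq_re_iff hI (z k)

lemma liftMap_of_isRealPt {n : ℕ} {z : Fin n → ℂ} (hz : isRealPt z) (I J : Hq) :
    liftMap I z = liftMap J z :=
  funext fun k => by simp only [liftMap, psi_of_im_eq_zero _ (hz k)]

lemma imUnit_psi (hI : I ∈ Sph) {z : ℂ} (hz : z.im ≠ 0) :
    imUnit (psi I z) = I ∨ imUnit (psi I z) = -I := by
  rw [imUnit, psi_sub_re hI, norm_smul, norm_eq_one_of_mem_Sph hI, mul_one, Real.norm_eq_abs,
    smul_smul]
  rcases abs_choice z.im with h | h <;> rw [h]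
  · left; rw [inv_mul_cancel₀ hz, one_smul]
  · right; rw [inv_neg, neg_mul, inv_mul_cancel₀ hz, neg_one_smul]

end ImaginaryUnits

section NormalizedImaginaryUnit

variable {n : ℕ}

lemma Jmap_of_isRealH {q : Fin n → Hq} (hq : isRealH q) : Jmap q = 0 := by
  rw [Jmap, dif_neg (not_exists.2 fun k hk => hk (hq k))]

lemma exists_Jmap_eq_imUnit {q : Fin n → Hq} (hq : ¬ isRealH q) :
    ∃ k, q k ≠ ((q k).re : Hq) ∧ Jmap q = imUnit (q k) := by
  classical
  have hex : ∃ k, q k ≠ ((q k).re : Hq) := by simpa [isRealH] using hq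
  rw [Jmap, dif_pos hex]
  exact ⟨_, (Finset.mem_filter.1 (Finset.min'_mem
    (Finset.univ.filter fun k => q k ≠ ((q k).re : Hq)) _)).2, rfl⟩

lemma Jmap_liftMap {I : Hq} (hI : I ∈ Sph) {z : Fin n → ℂ} (hz : ¬ isRealPt z) :
    Jmap (liftMap I z) = I ∨ Jmap (liftMap I z) = -I := by
  obtain ⟨k, hk, hJ⟩ := exists_Jmap_eq_imUnit (mt (isRealH_liftMap_iff hI z).1 hz)
  rw [hJ]
  exact imUnit_psi hI (mt (psi_eq_re_iff hI (z k)).2 hk)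

end NormalizedImaginaryUnit

lemma stem_ext {v w : Fin 2 → Hq} {K L : Hq} (hKL : K ≠ L)
    (hK : v 0 + K * v 1 = w 0 + K * w 1) (hL : v 0 + L * v 1 = w 0 + L * w 1) : v = w := by
  have h1 : v 1 = w 1 := by
    have : (K - L) * v 1 = (K - L) * w 1 :=
      calc (K - L) * v 1 = (v 0 + K * v 1) - (v 0 + L * v 1) := by noncomm_ring
        _ = (w 0 + K * w 1) - (w 0 + L * w 1) := by rw [hK, hL]
        _ = (K - L) * w 1 := by noncomm_ring
    exact mul_left_cancel₀ (sub_ne_zero.2 hKL) this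
  have h0 : v 0 = w 0 := by rw [h1] at hK; exact add_right_cancel hK
  funext i; fin_cases i
  exacts [h0, h1]

lemma stemFormula_eq {n : ℕ} (g : (Fin n → Hq) → Hq) (γ : C(unitInterval, Fin n → ℂ))
    {J K : Hq} (hJ : J ∈ Sph) (hK : K ∈ Sph) (hJK : J ≠ K) {v : Fin 2 → Hq}
    (hgJ : g (liftP γ J 1) = v 0 + J * v 1) (hgK : g (liftP γ K 1) = v 0 + K * v 1) :
    stemFormula g γ J K = v := by
  have hJK' : J - K ≠ 0 := sub_ne_zero.2 hJK
  funext i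
  fin_cases i
  · change stemFormula g γ J K 0 = v 0
    simp only [stemFormula, mulVec, dotProduct, Fin.sum_univ_two, Matrix.smul_apply, of_apply,
      cons_val', cons_val_fin_one, cons_val_zero, cons_val_one, smul_eq_mul, mul_neg, neg_mul,
      hgJ, hgK]
    have e : J * (v 0 + J * v 1) - K * (v 0 + K * v 1) = (J - K) * v 0 := by
      rw [mul_add, mul_add, ← mul_assoc J, ← mul_assoc K, mul_self_of_mem_Sph hJ,
        mul_self_of_mem_Sph hK, sub_mul]
      abel
    rw [mul_assoc, mul_assoc, ← sub_eq_add_neg, ← mul_sub, e, inv_mul_cancel_left₀ hJK']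
  · change stemFormula g γ J K 1 = v 1
    simp only [stemFormula, mulVec, dotProduct, Fin.sum_univ_two, Matrix.smul_apply, of_apply,
      cons_val', cons_val_fin_one, cons_val_zero, cons_val_one, smul_eq_mul, mul_neg, neg_mul,
      mul_one, hgJ, hgK]
    rw [← sub_eq_add_neg, ← mul_sub, add_sub_add_left_eq_sub, ← sub_mul,
      inv_mul_cancel_left₀ hJK']

lemma vstar_stem {I : Hq} (hI : I ∈ Sph) (p r : Fin 2 → Hq) :
    vstar p r 0 + I * vstar p r 1 = (p 0 + I * p 1) * r 0 + (I * (p 0 + I * p 1)) * r 1 := by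
  simp only [vstar, Matrix.cons_val_zero, Matrix.cons_val_one]
  rw [mul_add I (p 0), ← mul_assoc I I, mul_self_of_mem_Sph hI]
  noncomm_ring

lemma exists_continuousMap_range_eq_union {X : Type*} [TopologicalSpace X]
    (α β : C(unitInterval, X)) (h : α 1 = β 1) :
    ∃ δ : C(unitInterval, X), δ 0 = α 0 ∧ Set.range δ = Set.range α ∪ Set.range β := by
  let A : Path (α 0) (β 1) := ⟨α, rfl, h⟩
  let B : Path (β 0) (β 1) := ⟨β, rfl, rfl⟩
  refine ⟨(A.trans B.symm).toContinuousMap, (A.trans B.symm).source, ?_⟩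
  change Set.range (A.trans B.symm) = _
  rw [Path.trans_range, Path.symm_range]
  rfl

section PathLifts

variable {n : ℕ}

lemma mem_SUnits_iff {Ω : Set (Fin n → Hq)} {γ : C(unitInterval, Fin n → ℂ)} {I : Hq} :
    I ∈ SUnits Ω γ ↔ I ∈ Sph ∧ ∀ z ∈ Set.range γ, liftMap I z ∈ Ω := by
  simp only [Set.forall_mem_range]; rfl

lemma SUnits_subset_of_range_subset {Ω : Set (Fin n → Hq)} {γ δ : C(unitInterval, Fin n → ℂ)}
    (h : Set.range γ ⊆ Set.range δ) : SUnits Ω δ ⊆ SUnits Ω γ := fun _ hI =>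
  mem_SUnits_iff.2 ⟨(mem_SUnits_iff.1 hI).1, fun z hz => (mem_SUnits_iff.1 hI).2 z (h hz)⟩

lemma liftP_conjPath (γ : C(unitInterval, Fin n → ℂ)) (I : Hq) (t : unitInterval) :
    liftP (conjPath γ) I t = liftP γ (-I) t :=
  funext fun k => psi_star I (γ t k)

lemma mem_SUnits_conjPath_iff {Ω : Set (Fin n → Hq)} {γ : C(unitInterval, Fin n → ℂ)} {I : Hq} :
    I ∈ SUnits Ω (conjPath γ) ↔ -I ∈ SUnits Ω γ := by
  simp only [SUnits, Set.mem_ofPred_eq, liftP_conjPath, neg_mem_Sph_iff]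

lemma conjPath_mem_PathsTo {Ω : Set (Fin n → Hq)} {γ : C(unitInterval, Fin n → ℂ)}
    (hγ : γ ∈ PathsTo Ω) : conjPath γ ∈ PathsTo Ω := by
  obtain ⟨h0, I, hI⟩ := hγ
  refine ⟨fun k => ?_, -I, mem_SUnits_conjPath_iff.2 (by rwa [neg_neg])⟩
  simp [conjPath, h0 k]

end PathLifts

section StemPreserving

variable {n : ℕ} {Ω₁ Ω₂ : Set (Fin n → Hq)} {g : (Fin n → Hq) → Hq}
  {G : C(unitInterval, Fin n → ℂ) → Fin 2 → Hq} {γ : C(unitInterval, Fin n → ℂ)}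

lemma StemPreserving.mem_PathsTo (h₂ : StemPreserving Ω₁ Ω₂) (hγ : γ ∈ PathsTo Ω₁) :
    γ ∈ PathsTo Ω₂ :=
  let ⟨K, hK, _⟩ := h₂.1 γ hγ
  ⟨hγ.1, K, hK⟩

lemma stem_eq_of_forall_SUnits (h₂ : StemPreserving Ω₁ Ω₂) (hG : IsStem Ω₂ g G)
    (hγ : γ ∈ PathsTo Ω₁) {v : Fin 2 → Hq}
    (hv : ∀ K ∈ SUnits Ω₂ γ, g (liftP γ K 1) = v 0 + K * v 1) : G γ = v := by
  obtain ⟨K, hK, L, hL, hKL⟩ := h₂.1 γ hγ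
  have hγ₂ := h₂.mem_PathsTo hγ
  exact stem_ext hKL ((hG γ hγ₂ K hK).symm.trans (hv K hK))
    ((hG γ hγ₂ L hL).symm.trans (hv L hL))

lemma subStem_eq (h₂ : StemPreserving Ω₁ Ω₂) (hG : IsStem Ω₂ g G) (hγ : γ ∈ PathsTo Ω₁) :
    subStem Ω₂ g γ = G γ := by
  obtain ⟨K, hK, L, hL, hKL⟩ := h₂.1 γ hγ
  have hpair : ∃ p : Hq × Hq, p.1 ∈ SUnits Ω₂ γ ∧ p.2 ∈ SUnits Ω₂ γ ∧ p.1 ≠ p.2 :=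
    ⟨(K, L), hK, hL, hKL⟩
  rw [subStem, dif_pos hpair]
  obtain ⟨hK', hL', hKL'⟩ := hpair.choose_spec
  have hγ₂ := h₂.mem_PathsTo hγ
  exact stemFormula_eq g γ hK'.1 hL'.1 hKL' (hG γ hγ₂ _ hK') (hG γ hγ₂ _ hL')

lemma stem_conjPath (h₂ : StemPreserving Ω₁ Ω₂) (hG : IsStem Ω₂ g G) (hγ : γ ∈ PathsTo Ω₁) :
    G (conjPath γ) = ![G γ 0, -G γ 1] := by
  refine stem_eq_of_forall_SUnits h₂ hG (conjPath_mem_PathsTo hγ) fun K hK => ?_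
  rw [liftP_conjPath, hG γ (h₂.mem_PathsTo hγ) (-K) (mem_SUnits_conjPath_iff.1 hK)]
  simp

lemma stem_of_isRealPt (h₂ : StemPreserving Ω₁ Ω₂) (hG : IsStem Ω₂ g G) (hγ : γ ∈ PathsTo Ω₁)
    (hreal : isRealPt (γ 1)) (I : Hq) : G γ = ![g (liftP γ I 1), 0] :=
  stem_eq_of_forall_SUnits h₂ hG hγ fun K _ => by
    simp [liftP, liftMap_of_isRealPt hreal K I]

lemma exists_common_SUnits_of_endpoint_eq (h₂ : StemPreserving Ω₁ Ω₂)
    {α β : C(unitInterval, Fin n → ℂ)} {I : Hq} (hα : α ∈ PathsTo Ω₁)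
    (hαI : I ∈ SUnits Ω₁ α) (hβI : I ∈ SUnits Ω₁ β) (hend : α 1 = β 1) :
    ∃ K L, K ≠ L ∧ K ∈ SUnits Ω₂ α ∩ SUnits Ω₂ β ∧ L ∈ SUnits Ω₂ α ∩ SUnits Ω₂ β := by
  obtain ⟨δ, hδ0, hδ⟩ := exists_continuousMap_range_eq_union α β hend
  have hδI : I ∈ SUnits Ω₁ δ := by
    refine mem_SUnits_iff.2 ⟨hαI.1, ?_⟩
    rw [hδ]
    rintro z (hz | hz)
    exacts [(mem_SUnits_iff.1 hαI).2 z hz, (mem_SUnits_iff.1 hβI).2 z hz]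
  obtain ⟨K, hK, L, hL, hKL⟩ := h₂.1 δ ⟨hδ0 ▸ hα.1, I, hδI⟩
  have hsub : SUnits Ω₂ δ ⊆ SUnits Ω₂ α ∩ SUnits Ω₂ β :=
    Set.subset_inter (SUnits_subset_of_range_subset (hδ ▸ Set.subset_union_left))
      (SUnits_subset_of_range_subset (hδ ▸ Set.subset_union_right))
  exact ⟨K, L, hKL, hsub hK, hsub hL⟩

lemma stem_eq_of_endpoint_eq (h₂ : StemPreserving Ω₁ Ω₂) (hG : IsStem Ω₂ g G)
    {α β : C(unitInterval, Fin n → ℂ)} {I : Hq} (hα : α ∈ PathsTo Ω₁) (hβ : β ∈ PathsTo Ω₁)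
    (hαI : I ∈ SUnits Ω₁ α) (hβI : I ∈ SUnits Ω₁ β) (hend : α 1 = β 1) : G α = G β := by
  obtain ⟨K, L, hKL, hK, hL⟩ := exists_common_SUnits_of_endpoint_eq h₂ hα hαI hβI hend
  have hα₂ := h₂.mem_PathsTo hα
  have hβ₂ := h₂.mem_PathsTo hβ
  have hlift : ∀ M, liftP α M 1 = liftP β M 1 := fun M => congrArg (liftMap M) hend
  exact stem_ext hKL (by rw [← hG α hα₂ K hK.1, ← hG β hβ₂ K hK.2, hlift])
    (by rw [← hG α hα₂ L hL.1, ← hG β hβ₂ L hL.2, hlift])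

lemma pointStem_of_isRealH {q : Fin n → Hq} (hq : isRealH q) :
    pointStem Ω₁ Ω₂ g q = ![g q, 0] := by
  rw [pointStem, if_pos hq]

lemma pointStem_liftP (h₂ : StemPreserving Ω₁ Ω₂) (hG : IsStem Ω₂ g G) {J : Hq}
    (hγ : γ ∈ PathsTo Ω₁) (hJ : J ∈ SUnits Ω₁ γ) (hq : ¬ isRealH (liftP γ J 1))
    (hJmap : Jmap (liftP γ J 1) = J) : pointStem Ω₁ Ω₂ g (liftP γ J 1) = G γ := by
  have hex : ∃ δ, δ ∈ PathsTo Ω₁ ∧ (∀ t, liftP δ (Jmap (liftP γ J 1)) t ∈ Ω₁) ∧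
      liftP δ (Jmap (liftP γ J 1)) 1 = liftP γ J 1 :=
    ⟨γ, hγ, by rw [hJmap]; exact ⟨hJ.2, rfl⟩⟩
  rw [pointStem, if_neg hq, dif_pos hex]
  obtain ⟨hδ, hδJ, hδ1⟩ := hex.choose_spec
  generalize hex.choose = δ at hδ hδJ hδ1 ⊢
  rw [hJmap] at hδJ hδ1
  rw [subStem_eq h₂ hG hδ]
  exact stem_eq_of_endpoint_eq h₂ hG hδ hγ ⟨hJ.1, hδJ⟩ hJ (liftMap_injective hJ.1 hδ1)

lemma starProd_liftP (h₂ : StemPreserving Ω₁ Ω₂) (hG : IsStem Ω₂ g G) (f : (Fin n → Hq) → Hq)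
    {I : Hq} (hγ : γ ∈ PathsTo Ω₁) (hI : I ∈ SUnits Ω₁ γ) :
    starProd Ω₁ Ω₂ f g (liftP γ I 1) =
      f (liftP γ I 1) * G γ 0 + (I * f (liftP γ I 1)) * G γ 1 := by
  by_cases hq : isRealH (liftP γ I 1)
  · have hreal : isRealPt (γ 1) := (isRealH_liftMap_iff hI.1 _).1 hq
    rw [starProd, pointStem_of_isRealH hq, Jmap_of_isRealH hq, stem_of_isRealPt h₂ hG hγ hreal I]
    simp
  have hJ : Jmap (liftP γ I 1) = I ∨ Jmap (liftP γ I 1) = -I :=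
    Jmap_liftMap hI.1 (mt (isRealH_liftMap_iff hI.1 _).2 hq)
  rcases hJ with hJ | hJ
  · rw [starProd, hJ, pointStem_liftP h₂ hG hγ hI hq hJ]
  · have hq' : liftP γ I 1 = liftP (conjPath γ) (-I) 1 := by rw [liftP_conjPath, neg_neg]
    have hP : pointStem Ω₁ Ω₂ g (liftP γ I 1) = ![G γ 0, -G γ 1] := by
      rw [hq', pointStem_liftP h₂ hG (conjPath_mem_PathsTo hγ)
        (mem_SUnits_conjPath_iff.2 (by rwa [neg_neg])) (hq' ▸ hq) (hq' ▸ hJ),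
        stem_conjPath h₂ hG hγ]
    rw [starProd, hJ, hP]
    simp

end StemPreserving

theorem starProd_pathSlice_general {n : ℕ} (Ω₁ Ω₂ : Set (Fin n → Hq))
    (h₂ : StemPreserving Ω₁ Ω₂)
    (f g : (Fin n → Hq) → Hq) (F : C(unitInterval, Fin n → ℂ) → Fin 2 → Hq)
    (hF : IsStem Ω₁ f F) (hg : IsPathSlice Ω₂ g) :
    IsPathSlice Ω₁ (starProd Ω₁ Ω₂ f g) ∧
    IsStem Ω₁ (starProd Ω₁ Ω₂ f g) (fun γ => vstar (F γ) (subStem Ω₂ g γ)) := by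
  obtain ⟨G, hG⟩ := hg
  have hstem : IsStem Ω₁ (starProd Ω₁ Ω₂ f g) (fun γ => vstar (F γ) (subStem Ω₂ g γ)) := by
    intro γ hγ I hI
    rw [starProd_liftP h₂ hG f hγ hI, vstar_stem hI.1, ← hF γ hγ I hI, subStem_eq h₂ hG hγ]
  exact ⟨⟨_, hstem⟩, hstem⟩

/-- `f*g` is path-slice on `Ω₁`, and `F * F_{Ω₁}^g` (pointwise
`*`-product of stems) is a path-slice stem function of `f*g`. -/
theorem starProd_pathSlice {n : ℕ} (Ω₁ Ω₂ : Set (Fin n → Hq))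
    (h₁ : RealPathConnected Ω₁) (h₂ : StemPreserving Ω₁ Ω₂)
    (f g : (Fin n → Hq) → Hq) (F : C(unitInterval, Fin n → ℂ) → Fin 2 → Hq)
    (hF : IsStem Ω₁ f F) (hg : IsPathSlice Ω₂ g) :
    IsPathSlice Ω₁ (starProd Ω₁ Ω₂ f g) ∧
    IsStem Ω₁ (starProd Ω₁ Ω₂ f g) (fun γ => vstar (F γ) (subStem Ω₂ g γ)) :=
  starProd_pathSlice_general Ω₁ Ω₂ h₂ f g F hF hg
end
end
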